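/- arXiv:1904.09298 — 3 statements merged into one kernel-verified Lean document; each statement's English description precedes it below -/
import Mathlib

section
/- Let G be a graph such that edges ε_1,...,ε_k ∈ E(G) form a k-cycle, k ≥ 3. Then Σ_{S ⊆ [k-1]} (-1)^{|S|} Y_{G - ∪_{i∈S}{ε_i}} = 0. -/
open scoped Classical
noncomputable section

instance (n : ℕ) : Fintype (Setoid (Fin n)) := by
  haveI : Finite (Setoid (Fin n)) :=
    Finite.of_injective (fun s : Setoid (Fin n) => s.r)
      (fun a b h => Setoid.ext fun x y => by rw [show a.r = b.r from h])
  exact Fintype.ofFinite _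

/-- Homogeneous degree-`n` part of formal power series in noncommuting variables
`x_0, x_1, x_2, …`: a coefficient for each word (monomial) of length `n`. -/
abbrev NCF (n : ℕ) := (Fin n → ℕ) → ℚ

/-- Power sum symmetric function in noncommuting variables. -/
def pfun {n : ℕ} (π : Setoid (Fin n)) : NCF n :=
  fun w => if ∀ i j : Fin n, π.r i j → w i = w j then 1 else 0

/-- Elementary symmetric function in noncommuting variables. -/
def efun {n : ℕ} (π : Setoid (Fin n)) : NCF n :=
  fun w => if ∀ i j : Fin n, i ≠ j → π.r i j → w i ≠ w j then 1 else 0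

/-- Chromatic symmetric function in noncommuting variables. -/
def YG {n : ℕ} (G : SimpleGraph (Fin n)) : NCF n :=
  fun w => if ∀ i j : Fin n, G.Adj i j → w i ≠ w j then 1 else 0

/-- Product (concatenation of monomials) of noncommuting series. -/
def ncmul {n m : ℕ} (f : NCF n) (g : NCF m) : NCF (n + m) :=
  fun w => f (fun i => w (Fin.castAdd m i)) * g (fun j => w (Fin.natAdd n j))

/-- `π` is a connected partition of `G`: each block induces a connected subgraph. -/
def connPart {n : ℕ} (G : SimpleGraph (Fin n)) (π : Setoid (Fin n)) : Prop :=
  ∀ b ∈ π.classes, (G.induce b).Connected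

/-- `mu` is the Möbius function of the lattice of set partitions of `[n]`
(ordered by refinement). -/
def MoebiusPi (n : ℕ) (mu : Setoid (Fin n) → Setoid (Fin n) → ℚ) : Prop :=
  ∀ σ π : Setoid (Fin n), σ ≤ π →
    (∑ τ : Setoid (Fin n), if σ ≤ τ ∧ τ ≤ π then mu σ τ else 0) = if σ = π then 1 else 0

/-- Schur function in noncommuting variables (relative to a Möbius function `mu`). -/
def xf {n : ℕ} (mu : Setoid (Fin n) → Setoid (Fin n) → ℚ) (π : Setoid (Fin n)) : NCF n :=
  ∑ σ : Setoid (Fin n), if σ ≤ π then mu σ π • pfun σ else 0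

/-- The disjoint union of complete graphs on the blocks of `π`. -/
def graphOf {n : ℕ} (π : Setoid (Fin n)) : SimpleGraph (Fin n) where
  Adj i j := i ≠ j ∧ π.r i j
  symm := by refine ⟨?_⟩; intro i j h; exact ⟨Ne.symm h.1, π.iseqv.symm h.2⟩
  loopless := by refine ⟨?_⟩; intro i h; exact h.1 rfl


lemma sum_superset_alt {α : Type*} [Fintype α] [DecidableEq α]
    (F : Finset α) (hF : F ≠ Finset.univ) :
    ∑ S : Finset α, (if F ⊆ S then ((-1:ℚ))^S.card else 0) = 0 := by
  rw [← Finset.sum_filter]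
  have h1 : ∑ S ∈ Finset.univ.filter (fun S => F ⊆ S), ((-1:ℚ))^S.card
      = ∑ T ∈ Fᶜ.powerset, ((-1:ℚ))^(F ∪ T).card := by
    refine Finset.sum_nbij' (fun S => S \ F) (fun T => F ∪ T) ?_ ?_ ?_ ?_ ?_
    · intro S hS
      simp only [Finset.mem_filter] at hS
      simp only [Finset.mem_powerset]
      intro x hx
      simp only [Finset.mem_sdiff] at hx
      simp [hx.2]
    · intro T _; simp [Finset.subset_union_left]
    · intro S hS
      simp only [Finset.mem_filter] at hS
      exact Finset.union_sdiff_of_subset hS.2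
    · intro T hT
      simp only [Finset.mem_powerset] at hT
      show (F ∪ T) \ F = T
      rw [Finset.union_sdiff_cancel_left]
      rw [Finset.disjoint_left]
      intro x hxF hxT
      have := hT hxT
      simp at this
      exact this hxF
    · intro S hS
      simp only [Finset.mem_filter] at hS
      rw [Finset.union_sdiff_of_subset hS.2]
  rw [h1]
  have h2 : ∀ T ∈ Fᶜ.powerset, ((-1:ℚ))^(F ∪ T).card = (-1)^F.card * (-1)^T.card := by
    intro T hT
    simp only [Finset.mem_powerset] at hT
    rw [Finset.card_union_of_disjoint, pow_add]
    rw [Finset.disjoint_left]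
    intro x hxF hxT
    have := hT hxT
    simp at this
    exact this hxF
  rw [Finset.sum_congr rfl h2, ← Finset.mul_sum]
  have h3 : ∑ T ∈ Fᶜ.powerset, ((-1:ℚ))^T.card = 0 := by
    have := Finset.sum_powerset_neg_one_pow_card (x := Fᶜ)
    rw [if_neg (by simp [Finset.compl_eq_empty_iff]; exact hF)] at this
    exact_mod_cast congrArg (Int.cast : ℤ → ℚ) this
  rw [h3, mul_zero]

/-- if edges eps_1, ..., eps_k of G form a k-cycle (k = m+3 >= 3,
with vertices v 0, v 1, ..., cyclically adjacent), then the alternating sum over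
subsets S of the first k-1 cycle edges of Y_{G - S} vanishes. -/
theorem k_deletion (n m : ℕ) (G : SimpleGraph (Fin n)) (v : Fin (m + 3) → Fin n)
    (hv : Function.Injective v)
    (hadj : ∀ i : Fin (m + 3), G.Adj (v i) (v (i + 1))) :
    ∑ S : Finset (Fin (m + 2)),
      ((-1 : ℚ) ^ S.card) •
        YG (G.deleteEdges
          (↑(S.image fun i : Fin (m + 2) => s(v i.castSucc, v (i.castSucc + 1)))))
      = 0 := by
  funext w
  rw [Finset.sum_apply, Pi.zero_apply]
  simp only [Pi.smul_apply, smul_eq_mul, YG]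
  set ε : Fin (m+2) → Sym2 (Fin n) := fun i => s(v i.castSucc, v (i.castSucc + 1)) with hεdef
  -- value computation for castSucc + 1
  have hval : ∀ a : Fin (m+2), ((a.castSucc + (1 : Fin (m+3))) : Fin (m+3)).val = (a : ℕ) + 1 := by
    intro a
    have h1 : ((1 : Fin (m+3)) : ℕ) = 1 := rfl
    rw [Fin.val_add, Fin.coe_castSucc, h1, Nat.mod_eq_of_lt (by omega)]
  -- injectivity of the edge map
  have hεinj : Function.Injective ε := by
    intro a b hab
    simp only [hεdef, Sym2.eq, Sym2.rel_iff', Prod.mk.injEq, Prod.swap_prod_mk] at hab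
    rcases hab with ⟨h1, _⟩ | ⟨h1, h2⟩
    · exact Fin.castSucc_injective _ (hv h1)
    · have e1 := congrArg Fin.val (hv h1)
      have e2 := congrArg Fin.val (hv h2)
      rw [Fin.coe_castSucc, hval b] at e1
      rw [hval a, Fin.coe_castSucc] at e2
      omega
  -- the last cycle edge is not among the k-1 deletable ones
  have hlast1 : (Fin.last (m+2) + 1 : Fin (m+3)) = 0 := by
    apply Fin.ext
    simp [Fin.val_add, Fin.last]
  have hnotin : ∀ a : Fin (m+2), ε a ≠ s(v (Fin.last (m+2)), v 0) := by
    intro a hcon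
    simp only [hεdef, Sym2.eq, Sym2.rel_iff', Prod.mk.injEq, Prod.swap_prod_mk] at hcon
    rcases hcon with ⟨h1, _⟩ | ⟨h1, h2⟩
    · have := congrArg Fin.val (hv h1)
      rw [Fin.coe_castSucc] at this
      simp [Fin.last] at this
      omega
    · have e1 := congrArg Fin.val (hv h1)
      have e2 := congrArg Fin.val (hv h2)
      rw [Fin.coe_castSucc] at e1
      rw [hval a] at e2
      simp only [Fin.val_zero, Fin.val_last] at e1 e2
      omega
  -- the "base" condition A and the failure set F
  set A : Prop := ∀ i j : Fin n, G.Adj i j → (∀ a : Fin (m+2), ε a ≠ s(i, j)) → w i ≠ w j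
    with hAdef
  set F : Finset (Fin (m+2)) :=
    Finset.univ.filter (fun a => w (v a.castSucc) = w (v (a.castSucc + 1))) with hFdef
  -- key equivalence
  have hQ : ∀ S : Finset (Fin (m+2)),
      ((∀ i j : Fin n, (G.deleteEdges ↑(S.image ε)).Adj i j → w i ≠ w j) ↔ (A ∧ F ⊆ S)) := by
    intro S
    constructor
    · intro h
      constructor
      · intro i j hij hni
        apply h
        rw [SimpleGraph.deleteEdges_adj]
        refine ⟨hij, ?_⟩
        simp only [Finset.coe_image, Set.mem_image, Finset.mem_coe]
        rintro ⟨a, _, ha⟩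
        exact hni a ha
      · intro a haF
        by_contra haS
        have hwa : w (v a.castSucc) = w (v (a.castSucc + 1)) := by
          simp only [hFdef, Finset.mem_filter] at haF
          exact haF.2
        refine h (v a.castSucc) (v (a.castSucc + 1)) ?_ hwa
        rw [SimpleGraph.deleteEdges_adj]
        refine ⟨hadj a.castSucc, ?_⟩
        simp only [Finset.coe_image, Set.mem_image, Finset.mem_coe]
        rintro ⟨b, hbS, hb⟩
        exact haS (hεinj hb ▸ hbS)
    · rintro ⟨hA, hFS⟩ i j hij
      rw [SimpleGraph.deleteEdges_adj] at hij
      obtain ⟨hG, hnot⟩ := hij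
      by_cases hc : ∃ a : Fin (m+2), ε a = s(i, j)
      · obtain ⟨a, ha⟩ := hc
        have haS : a ∉ S := by
          intro haS
          apply hnot
          simp only [Finset.coe_image, Set.mem_image, Finset.mem_coe]
          exact ⟨a, haS, ha⟩
        have haF : a ∉ F := fun h => haS (hFS h)
        have hne : w (v a.castSucc) ≠ w (v (a.castSucc + 1)) := by
          simp only [hFdef, Finset.mem_filter, Finset.mem_univ, true_and] at haF
          exact haF
        simp only [hεdef, Sym2.eq, Sym2.rel_iff', Prod.mk.injEq, Prod.swap_prod_mk] at ha
        rcases ha with ⟨h1, h2⟩ | ⟨h1, h2⟩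
        · rw [← h1, ← h2]; exact hne
        · rw [← h1, ← h2]; exact hne.symm
      · push_neg at hc
        exact hA i j hG hc
  -- A implies F ≠ univ
  have hAF : A → F ≠ Finset.univ := by
    intro hA hFu
    have hall : ∀ a : Fin (m+2), w (v a.castSucc) = w (v (a.castSucc + 1)) := by
      intro a
      have : a ∈ F := hFu ▸ Finset.mem_univ a
      simp only [hFdef, Finset.mem_filter] at this
      exact this.2
    have hchain : ∀ a : Fin (m+3), w (v a) = w (v 0) := by
      intro a
      induction a using Fin.induction with
      | zero => rfl
      | succ i ih => rw [← Fin.coeSucc_eq_succ, ← hall i]; exact ih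
    have hlasteq : w (v (Fin.last (m+2))) = w (v 0) := hchain _
    have hadjlast := hadj (Fin.last (m+2))
    rw [hlast1] at hadjlast
    exact hA (v (Fin.last (m+2))) (v 0) hadjlast hnotin hlasteq
  -- now compute the sum
  have hrw : ∀ S : Finset (Fin (m+2)),
      ((-1 : ℚ) ^ S.card) *
        (if ∀ i j : Fin n, (G.deleteEdges ↑(S.image ε)).Adj i j → w i ≠ w j then 1 else 0)
      = if A then (if F ⊆ S then ((-1:ℚ))^S.card else 0) else 0 := by
    intro S
    rw [if_congr (hQ S) rfl rfl]
    by_cases hA : A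
    · rw [if_pos hA]
      by_cases hFS : F ⊆ S
      · rw [if_pos ⟨hA, hFS⟩, if_pos hFS, mul_one]
      · rw [if_neg (fun h => hFS h.2), if_neg hFS, mul_zero]
    · rw [if_neg hA, if_neg (fun h => hA h.1), mul_zero]
  trans ∑ S : Finset (Fin (m+2)), (if A then (if F ⊆ S then ((-1:ℚ))^S.card else 0) else 0)
  · exact Finset.sum_congr rfl (fun S _ => by convert hrw S)
  by_cases hA : A
  · rw [Finset.sum_congr rfl (fun S _ => if_pos hA)]
    exact sum_superset_alt F (hAF hA)
  · rw [Finset.sum_congr rfl (fun S _ => if_neg hA), Finset.sum_const_zero]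

end
end

section
/- For every set partition π ⊢ [n], the induced function x_π↑ is a nonnegative linear combination of Schur functions x_σ, σ ⊢ [n+1], in noncommuting variables. -/
open scoped Classical
noncomputable section

/-- The induction operator: duplicate the last variable of each monomial. -/
def up {m : ℕ} (f : NCF (m + 1)) : NCF (m + 2) :=
  fun w => if w (Fin.last (m + 1)) = w ((Fin.last m).castSucc) then f (Fin.init w) else 0



def dn {m : ℕ} (k : Fin (m + 2)) : Fin (m + 1) := ⟨min k.1 m, by omega⟩

lemma dn_castSucc {m : ℕ} (i : Fin (m + 1)) : dn (Fin.castSucc i) = i := by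
  apply Fin.ext; simp [dn, Fin.coe_castSucc]; omega

def plusS {m : ℕ} (σ : Setoid (Fin (m + 1))) : Setoid (Fin (m + 2)) :=
  Setoid.comap dn σ

def tau0 {m : ℕ} (ρ : Setoid (Fin (m + 2))) : Setoid (Fin (m + 1)) :=
  Relation.EqvGen.setoid (fun a b => ∃ i j, ρ.r i j ∧ dn i = a ∧ dn j = b)

lemma up_pfun {m : ℕ} (σ : Setoid (Fin (m + 1))) (w : Fin (m + 2) → ℕ) :
    up (pfun σ) w = pfun (plusS σ) w := by
  unfold up pfun plusS
  by_cases hC : w (Fin.last (m + 1)) = w ((Fin.last m).castSucc)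
  · have hw : ∀ k : Fin (m + 2), w (Fin.castSucc (dn k)) = w k := by
      intro k
      by_cases hk : k.1 ≤ m
      · congr 1; apply Fin.ext; simp [dn, Fin.coe_castSucc]; omega
      · have hk' : k = Fin.last (m + 1) := by apply Fin.ext; simp [Fin.last]; omega
        have : dn k = Fin.last m := by apply Fin.ext; simp [dn, hk', Fin.last]
        rw [this, hk']; exact hC.symm
    simp only [hC, if_true]
    congr 1
    apply propext
    constructor
    · intro h i j hij
      rw [show (Setoid.comap dn σ) i j ↔ σ.r (dn i) (dn j) from Iff.rfl] at hij
      have := h (dn i) (dn j) hij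
      simp only [Fin.init] at this
      rw [← hw i, ← hw j]
      exact this
    · intro h i j hij
      have := h (Fin.castSucc i) (Fin.castSucc j)
        (by rw [show (Setoid.comap dn σ) _ _ ↔ σ.r (dn (Fin.castSucc i)) (dn (Fin.castSucc j))
              from Iff.rfl, dn_castSucc, dn_castSucc]; exact hij)
      simpa [Fin.init] using this
  · simp only [hC, if_false]
    rw [eq_comm, ite_eq_right_iff]
    intro h
    exfalso
    apply hC
    have h1 : dn (Fin.last (m + 1)) = Fin.last m := by
      apply Fin.ext; simp [dn, Fin.last]
    have := h (Fin.last (m + 1)) ((Fin.last m).castSucc)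
      (by rw [show (Setoid.comap dn σ) _ _ ↔ σ.r (dn (Fin.last (m+1))) (dn ((Fin.last m).castSucc))
            from Iff.rfl, h1, dn_castSucc])
    exact this

lemma le_plus_iff {m : ℕ} (ρ : Setoid (Fin (m + 2))) (σ : Setoid (Fin (m + 1))) :
    ρ ≤ plusS σ ↔ tau0 ρ ≤ σ := by
  constructor
  · intro h
    exact Setoid.eqvGen_le (fun a b hab => by
      obtain ⟨i, j, hij, rfl, rfl⟩ := hab
      exact (Setoid.le_def.mp h) hij)
  · intro h
    rw [Setoid.le_def]
    intro i j hij
    exact (Setoid.le_def.mp h) (Relation.EqvGen.rel _ _ ⟨i, j, hij, rfl, rfl⟩)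

/-- reversed Möbius convolution, via matrix one-sided-inverse commutation. -/
lemma moebius_rev {n : ℕ} (mu : Setoid (Fin n) → Setoid (Fin n) → ℚ) (h : MoebiusPi n mu)
    (τ π : Setoid (Fin n)) :
    (∑ σ : Setoid (Fin n), if τ ≤ σ ∧ σ ≤ π then mu σ π else 0) = if τ = π then 1 else 0 := by
  set M : Matrix (Setoid (Fin n)) (Setoid (Fin n)) ℚ :=
    fun σ τ => if σ ≤ τ then mu σ τ else 0 with hM
  set Z : Matrix (Setoid (Fin n)) (Setoid (Fin n)) ℚ :=
    fun σ τ => if σ ≤ τ then 1 else 0 with hZ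
  have hMZ : M * Z = 1 := by
    ext σ π'
    rw [Matrix.mul_apply]
    have : ∀ τ' : Setoid (Fin n), M σ τ' * Z τ' π' =
        if σ ≤ τ' ∧ τ' ≤ π' then mu σ τ' else 0 := by
      intro τ'
      simp only [hM, hZ]
      by_cases h1 : σ ≤ τ' <;> by_cases h2 : τ' ≤ π' <;> simp [h1, h2]
    rw [Finset.sum_congr rfl (fun τ' _ => this τ')]
    by_cases hσπ : σ ≤ π'
    · rw [h σ π' hσπ, Matrix.one_apply]
    · rw [Finset.sum_eq_zero, Matrix.one_apply]
      · have : ¬ σ = π' := fun he => hσπ (he ▸ le_refl σ)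
        simp [this]
      · intro τ' _
        rw [ite_eq_right_iff]
        rintro ⟨h1, h2⟩
        exact absurd (le_trans h1 h2) hσπ
  have hZM : Z * M = 1 := mul_eq_one_comm.mp hMZ
  have := congrFun (congrFun hZM τ) π
  rw [Matrix.mul_apply, Matrix.one_apply] at this
  rw [← this]
  apply Finset.sum_congr rfl
  intro σ _
  simp only [hZ, hM]
  by_cases h1 : τ ≤ σ <;> by_cases h2 : σ ≤ π <;> simp [h1, h2]

/-- Möbius inversion for `xf`: `pfun κ` is the sum of the `xf ρ` for `ρ ≤ κ`. -/
lemma pfun_eq_sum_xf {n : ℕ} (mu : Setoid (Fin n) → Setoid (Fin n) → ℚ) (h : MoebiusPi n mu)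
    (κ : Setoid (Fin n)) (v : Fin n → ℕ) :
    pfun κ v = ∑ ρ : Setoid (Fin n), if ρ ≤ κ then xf mu ρ v else 0 := by
  have hterm : ∀ ρ : Setoid (Fin n), (if ρ ≤ κ then xf mu ρ v else 0) =
      ∑ τ : Setoid (Fin n), if τ ≤ ρ ∧ ρ ≤ κ then mu τ ρ * pfun τ v else 0 := by
    intro ρ
    by_cases hρ : ρ ≤ κ
    · simp only [hρ, if_true, and_true, xf, Finset.sum_apply]
      apply Finset.sum_congr rfl
      intro τ _
      by_cases ht : τ ≤ ρ <;> simp [ht]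
    · simp [hρ]
  rw [Finset.sum_congr rfl (fun ρ _ => hterm ρ), Finset.sum_comm]
  have : ∀ τ : Setoid (Fin n),
      (∑ ρ : Setoid (Fin n), if τ ≤ ρ ∧ ρ ≤ κ then mu τ ρ * pfun τ v else 0) =
      (∑ ρ : Setoid (Fin n), if τ ≤ ρ ∧ ρ ≤ κ then mu τ ρ else 0) * pfun τ v := by
    intro τ
    rw [Finset.sum_mul]
    apply Finset.sum_congr rfl
    intro ρ _
    by_cases hc : τ ≤ ρ ∧ ρ ≤ κ <;> simp [hc]
  rw [Finset.sum_congr rfl (fun τ _ => this τ)]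
  have hδ : ∀ τ : Setoid (Fin n),
      (∑ ρ : Setoid (Fin n), if τ ≤ ρ ∧ ρ ≤ κ then mu τ ρ else 0) = if τ = κ then 1 else 0 := by
    intro τ
    by_cases ht : τ ≤ κ
    · exact h τ κ ht
    · rw [Finset.sum_eq_zero, eq_comm, ite_eq_right_iff]
      · intro he; exact absurd (he ▸ le_refl τ) ht
      · intro ρ _
        rw [ite_eq_right_iff]
        rintro ⟨h1, h2⟩
        exact absurd (le_trans h1 h2) ht
  rw [Finset.sum_congr rfl (fun τ _ => by rw [hδ τ])]
  rw [Finset.sum_eq_single κ]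
  · simp
  · intro b _ hb; simp [hb]
  · intro hk; exact absurd (Finset.mem_univ κ) hk

/-- for every set partition pi, the induced function x_pi↑ is a
nonnegative linear combination of Schur functions in noncommuting variables. -/
theorem x_up_positive (m : ℕ) (π : Setoid (Fin (m + 1)))
    (mu₁ : Setoid (Fin (m + 1)) → Setoid (Fin (m + 1)) → ℚ) (hmu₁ : MoebiusPi (m + 1) mu₁)
    (mu₂ : Setoid (Fin (m + 2)) → Setoid (Fin (m + 2)) → ℚ) (hmu₂ : MoebiusPi (m + 2) mu₂) :
    ∃ c : Setoid (Fin (m + 2)) → ℚ, (∀ σ, 0 ≤ c σ) ∧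
      up (xf mu₁ π) = ∑ σ : Setoid (Fin (m + 2)), c σ • xf mu₂ σ := by
  refine ⟨fun ρ => if tau0 ρ = π then 1 else 0, fun ρ => by positivity, ?_⟩
  funext w
  -- Step 1 : expand `up (xf mu₁ π) w` as a sum over σ ≤ π
  have step1 : up (xf mu₁ π) w =
      ∑ σ : Setoid (Fin (m + 1)), if σ ≤ π then mu₁ σ π * up (pfun σ) w else 0 := by
    unfold up
    by_cases hC : w (Fin.last (m + 1)) = w ((Fin.last m).castSucc)
    · simp only [hC, if_true, xf, Finset.sum_apply]
      apply Finset.sum_congr rfl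
      intro σ _
      by_cases hσ : σ ≤ π <;> simp [hσ]
    · simp [hC]
  rw [step1]
  have step2 : ∀ σ : Setoid (Fin (m + 1)),
      (if σ ≤ π then mu₁ σ π * up (pfun σ) w else 0) =
      ∑ ρ : Setoid (Fin (m + 2)),
        if tau0 ρ ≤ σ ∧ σ ≤ π then mu₁ σ π * xf mu₂ ρ w else 0 := by
    intro σ
    by_cases hσ : σ ≤ π
    · rw [if_pos hσ, up_pfun, pfun_eq_sum_xf mu₂ hmu₂, Finset.mul_sum]
      apply Finset.sum_congr rfl
      intro ρ _
      rw [← le_plus_iff]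
      by_cases hρ : ρ ≤ plusS σ <;> simp [hρ, hσ]
    · simp [hσ]
  rw [Finset.sum_congr rfl (fun σ _ => step2 σ), Finset.sum_comm]
  rw [Finset.sum_apply]
  apply Finset.sum_congr rfl
  intro ρ _
  have : (∑ σ : Setoid (Fin (m + 1)),
      if tau0 ρ ≤ σ ∧ σ ≤ π then mu₁ σ π * xf mu₂ ρ w else 0) =
      (∑ σ : Setoid (Fin (m + 1)), if tau0 ρ ≤ σ ∧ σ ≤ π then mu₁ σ π else 0) * xf mu₂ ρ w := by
    rw [Finset.sum_mul]
    apply Finset.sum_congr rfl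
    intro σ _
    by_cases hc : tau0 ρ ≤ σ ∧ σ ≤ π <;> simp [hc]
  rw [this, moebius_rev mu₁ hmu₁]
  by_cases he : tau0 ρ = π <;> simp [he]

end
end

section
/- For set partitions π and σ, the elementary symmetric functions in noncommuting variables satisfy e_{π|σ} = e_π · e_σ, where π|σ is the slash product. -/
open scoped Classical
noncomputable section

/-- Disjoint-union setoid on a sum type. -/
def sumSetoid {α β : Type*} (r : Setoid α) (s : Setoid β) : Setoid (α ⊕ β) where
  r x y := Sum.LiftRel r.r s.r x y
  iseqv := by
    constructor
    · intro x; cases x with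
      | inl a => exact Sum.LiftRel.inl (r.iseqv.refl a)
      | inr b => exact Sum.LiftRel.inr (s.iseqv.refl b)
    · intro x y h; cases h with
      | inl h => exact Sum.LiftRel.inl (r.iseqv.symm h)
      | inr h => exact Sum.LiftRel.inr (s.iseqv.symm h)
    · intro x y z h h'
      cases h with
      | inl h => cases h' with
        | inl h' => exact Sum.LiftRel.inl (r.iseqv.trans h h')
      | inr h => cases h' with
        | inr h' => exact Sum.LiftRel.inr (s.iseqv.trans h h')

/-- The slash product of set partitions: blocks of pi together with the blocks
of sigma shifted up by n. -/
def slash {n m : ℕ} (π : Setoid (Fin n)) (σ : Setoid (Fin m)) : Setoid (Fin (n + m)) :=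
  Setoid.comap (⇑finSumFinEquiv.symm) (sumSetoid π σ)

/-- e_{pi | sigma} = e_pi * e_sigma. -/
theorem efun_slash (n m : ℕ) (π : Setoid (Fin n)) (σ : Setoid (Fin m)) :
    efun (slash π σ) = ncmul (efun π) (efun σ) := by
  funext w
  have key : (∀ i j : Fin (n + m), i ≠ j → (slash π σ).r i j → w i ≠ w j) ↔
      ((∀ i j : Fin n, i ≠ j → π.r i j → w (Fin.castAdd m i) ≠ w (Fin.castAdd m j)) ∧
       (∀ i j : Fin m, i ≠ j → σ.r i j → w (Fin.natAdd n i) ≠ w (Fin.natAdd n j))) := by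
    constructor
    · intro h
      constructor
      · intro i j hij hr
        refine h _ _ (fun hc => hij (Fin.castAdd_injective _ _ hc)) ?_
        show Sum.LiftRel π.r σ.r (finSumFinEquiv.symm (Fin.castAdd m i))
          (finSumFinEquiv.symm (Fin.castAdd m j))
        simp only [finSumFinEquiv_symm_apply_castAdd]
        exact Sum.LiftRel.inl hr
      · intro i j hij hr
        refine h _ _ (fun hc => hij (Fin.ext (by have := congrArg Fin.val hc; simp [Fin.natAdd] at this; omega))) ?_
        show Sum.LiftRel π.r σ.r (finSumFinEquiv.symm (Fin.natAdd n i))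
          (finSumFinEquiv.symm (Fin.natAdd n j))
        simp only [finSumFinEquiv_symm_apply_natAdd]
        exact Sum.LiftRel.inr hr
    · rintro ⟨h1, h2⟩ i j hij hr
      have hr' : Sum.LiftRel π.r σ.r (finSumFinEquiv.symm i) (finSumFinEquiv.symm j) := hr
      obtain ⟨x, hx⟩ : ∃ x, finSumFinEquiv x = i := ⟨_, Equiv.apply_symm_apply _ _⟩
      obtain ⟨y, hy⟩ : ∃ y, finSumFinEquiv y = j := ⟨_, Equiv.apply_symm_apply _ _⟩
      subst hx hy
      rw [Equiv.symm_apply_apply, Equiv.symm_apply_apply] at hr'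
      cases hr' with
      | inl hab =>
        rename_i a b
        simp only [finSumFinEquiv_apply_left]
        exact h1 a b (fun h' => hij (by rw [h'])) hab
      | inr hab =>
        rename_i a b
        simp only [finSumFinEquiv_apply_right]
        exact h2 a b (fun h' => hij (by rw [h'])) hab
  simp only [efun, ncmul, key]
  split_ifs with h h1 h2 h1 h2 <;> simp_all

end
end
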